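/- (Marginal price relation, charge–charge pair.) Let T ≥ 1 be a horizon, C : {1,…,T} → ℝ prices, S^end ∈ ℝ, and let x* = (p^{C*}, p^{D*}, s*) ∈ X(S^end) be an optimal schedule of F(T, C, S^end). Suppose t₁ < t₂ are in {1,…,T} with p^{C*}_{t₁} > 0, p^{D*}_{t₂} = 0, p^{C*}_{t₂} < P̄^C, and s*_t > S̲ for all t ∈ {t₁,…,t₂−1}. Then C_{t₁} ≤ ρ^{t₂−t₁} C_{t₂}. -/

import Mathlib

/-! Move charge `ε` from `t₁` to `t₂`, enlarged by `ρ ^ (t₂ - t₁)` to make up for the leakage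
in between. The state then drops by `Δt ηC ε ρ ^ (t - t₁)` on `t₁ ≤ t < t₂` and is unchanged
elsewhere, in particular at `T`. For small `ε > 0` the strict slacks at `t₁`, at `t₂` and in the
state keep the new schedule feasible, and its profit exceeds the optimal one by
`Δt ε (C t₁ - ρ ^ (t₂ - t₁) C t₂)`, which therefore cannot be positive. -/

open Finset

/-- Parameters of the energy storage system. -/
structure Params where
  Δt : ℝ
  ρ : ℝ
  ηC : ℝ
  ηD : ℝ
  PC : ℝ
  PD : ℝ
  Slo : ℝ
  Shi : ℝ
  Sinit : ℝ

/-- Validity of the parameters: Δt > 0, ρ ∈ (0,1], ηC, ηD ∈ (0,1],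
P̄^C > 0, P̄^D > 0, S̲ ≤ S̄, S̲ ≤ S^init ≤ S̄. -/
def Params.Valid (P : Params) : Prop :=
  0 < P.Δt ∧ 0 < P.ρ ∧ P.ρ ≤ 1 ∧ 0 < P.ηC ∧ P.ηC ≤ 1 ∧ 0 < P.ηD ∧ P.ηD ≤ 1 ∧
  0 < P.PC ∧ 0 < P.PD ∧ P.Slo ≤ P.Shi ∧ P.Slo ≤ P.Sinit ∧ P.Sinit ≤ P.Shi

/-- A feasible schedule over the horizon {1,…,T}, with the convention s 0 = S^init. -/
def Feasible (P : Params) (T : ℕ) (pC pD s : ℕ → ℝ) : Prop :=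
  s 0 = P.Sinit ∧
  ∀ t : ℕ, 1 ≤ t → t ≤ T →
    (s t = P.ρ * s (t - 1) + P.Δt * (P.ηC * pC t - pD t / P.ηD) ∧
     P.Slo ≤ s t ∧ s t ≤ P.Shi ∧
     0 ≤ pC t ∧ pC t ≤ P.PC ∧
     0 ≤ pD t ∧ pD t ≤ P.PD ∧
     pC t * pD t = 0)

/-- Profit Z = Σ_{t=1}^{T} Δt C_t (p^D_t − p^C_t). -/
noncomputable def profit (P : Params) (T : ℕ) (C pC pD : ℕ → ℝ) : ℝ :=
  ∑ t ∈ Finset.Icc 1 T, P.Δt * C t * (pD t - pC t)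

/-- Optimal schedule of F(T, C, S^end): feasible, meets the terminal constraint
s_T = S^end, and maximizes profit among such schedules. -/
def Optimal (P : Params) (T : ℕ) (C : ℕ → ℝ) (Send : ℝ) (pC pD s : ℕ → ℝ) : Prop :=
  Feasible P T pC pD s ∧ s T = Send ∧
  ∀ qC qD r : ℕ → ℝ, Feasible P T qC qD r → r T = Send →
    profit P T C qC qD ≤ profit P T C pC pD

/-- Minimum reachable level S̲_T at the end of the planning horizon. -/
noncomputable def SloT (P : Params) (T : ℕ) : ℝ :=
  max P.Slo (P.ρ ^ T * P.Sinit - P.Δt * (P.PD / P.ηD) * ∑ t ∈ Finset.range T, P.ρ ^ t)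

/-- Maximum reachable level S̄_T at the end of the planning horizon. -/
noncomputable def ShiT (P : Params) (T : ℕ) : ℝ :=
  min P.Shi (P.ρ ^ T * P.Sinit + P.Δt * P.ηC * P.PC * ∑ t ∈ Finset.range T, P.ρ ^ t)

open Filter Topology

lemma eventually_mul_le_of_pos (a : ℝ) {b : ℝ} (hb : 0 < b) : ∀ᶠ ε in 𝓝 (0 : ℝ), ε * a ≤ b :=
  (continuous_id.mul continuous_const).tendsto' 0 0 (zero_mul a) |>.eventually_le_const hb

section ChargeShift

variable (P : Params)

noncomputable def chargeShift (t₁ t₂ : ℕ) : ℕ → ℝ :=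
  Pi.single t₁ 1 - Pi.single t₂ (P.ρ ^ (t₂ - t₁))

noncomputable def stateShift (t₁ t₂ : ℕ) : ℕ → ℝ :=
  (Set.Ico t₁ t₂).indicator fun t => P.Δt * P.ηC * P.ρ ^ (t - t₁)

variable {P}

lemma chargeShift_left {t₁ t₂ : ℕ} (h : t₁ ≠ t₂) : chargeShift P t₁ t₂ t₁ = 1 := by
  simp [chargeShift, h]

lemma chargeShift_right {t₁ t₂ : ℕ} (h : t₁ ≠ t₂) :
    chargeShift P t₁ t₂ t₂ = -P.ρ ^ (t₂ - t₁) := by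
  simp [chargeShift, h.symm]

lemma chargeShift_of_ne {t₁ t₂ t : ℕ} (h₁ : t ≠ t₁) (h₂ : t ≠ t₂) :
    chargeShift P t₁ t₂ t = 0 := by
  simp [chargeShift, h₁, h₂]

lemma stateShift_sub_mul_pred {t₁ t₂ t : ℕ} (h12 : t₁ < t₂) (ht : 1 ≤ t) :
    stateShift P t₁ t₂ t - P.ρ * stateShift P t₁ t₂ (t - 1) =
      P.Δt * P.ηC * chargeShift P t₁ t₂ t := by
  simp only [stateShift, chargeShift, Set.indicator_apply, Set.mem_Ico, Pi.sub_apply,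
    Pi.single_apply]
  have hpow : t₁ < t → P.ρ ^ (t - t₁) = P.ρ * P.ρ ^ (t - 1 - t₁) := fun h => by
    rw [← pow_succ']; congr 1; omega
  split_ifs <;> (try (exfalso; omega)) <;> subst_vars
  · rw [hpow (by omega)]; ring
  · simp
  · rw [hpow h12]; ring
  · ring

lemma stateShift_nonneg (hΔt : 0 ≤ P.Δt) (hηC : 0 ≤ P.ηC) (hρ : 0 ≤ P.ρ) (t₁ t₂ t : ℕ) :
    0 ≤ stateShift P t₁ t₂ t :=
  Set.indicator_nonneg (fun _ _ => by positivity) t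

lemma stateShift_of_lt {t₁ t₂ t : ℕ} (ht : t < t₁) : stateShift P t₁ t₂ t = 0 :=
  Set.indicator_of_notMem (by rw [Set.mem_Ico]; omega) _

lemma stateShift_of_le {t₁ t₂ t : ℕ} (ht : t₂ ≤ t) : stateShift P t₁ t₂ t = 0 :=
  Set.indicator_of_notMem (by rw [Set.mem_Ico]; omega) _

lemma profit_sub_smul_chargeShift {T t₁ t₂ : ℕ} (C pC pD : ℕ → ℝ) (ε : ℝ)
    (ht₁ : t₁ ∈ Icc 1 T) (ht₂ : t₂ ∈ Icc 1 T) :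
    profit P T C (pC - ε • chargeShift P t₁ t₂) pD =
      profit P T C pC pD + P.Δt * ε * (C t₁ - P.ρ ^ (t₂ - t₁) * C t₂) := by
  have hterm : ∀ t, P.Δt * C t * (pD t - (pC - ε • chargeShift P t₁ t₂) t) =
      P.Δt * C t * (pD t - pC t) + (Pi.single t₁ (P.Δt * ε * C t₁) : ℕ → ℝ) t -
        (Pi.single t₂ (P.Δt * ε * P.ρ ^ (t₂ - t₁) * C t₂) : ℕ → ℝ) t := by
    intro t
    simp only [chargeShift, Pi.sub_apply, Pi.smul_apply, smul_eq_mul, Pi.single_apply]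
    split_ifs <;> subst_vars <;> ring
  simp only [profit, hterm, sum_add_distrib, sum_sub_distrib, sum_pi_single', if_pos ht₁,
    if_pos ht₂]
  ring

lemma Feasible.sub_smul_shift {T t₁ t₂ : ℕ} {pC pD s : ℕ → ℝ} (hx : Feasible P T pC pD s)
    (hΔt : 0 ≤ P.Δt) (hηC : 0 ≤ P.ηC) (hρ : 0 ≤ P.ρ) (ht₁ : 1 ≤ t₁) (h12 : t₁ < t₂)
    {ε : ℝ} (hε : 0 < ε) (hεC : ε ≤ pC t₁) (hd : pD t₂ = 0)
    (hεslack : ε * P.ρ ^ (t₂ - t₁) ≤ P.PC - pC t₂)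
    (hεs : ∀ t ∈ Ico t₁ t₂, ε * stateShift P t₁ t₂ t ≤ s t - P.Slo) :
    Feasible P T (pC - ε • chargeShift P t₁ t₂) pD (s - ε • stateShift P t₁ t₂) := by
  obtain ⟨hs0, hstep⟩ := hx
  refine ⟨by simp [hs0, stateShift_of_lt (P := P) (t₂ := t₂) ht₁], fun t ht htT => ?_⟩
  obtain ⟨hdyn, hlo, hhi, hC0, hCle, hD0, hDle, hCD⟩ := hstep t ht htT
  have hpulse := stateShift_sub_mul_pred (P := P) h12 ht
  have hδ := stateShift_nonneg hΔt hηC hρ t₁ t₂ t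
  have hlo' : ε * stateShift P t₁ t₂ t ≤ s t - P.Slo := by
    by_cases hmem : t ∈ Ico t₁ t₂
    · exact hεs t hmem
    · rw [stateShift, Set.indicator_of_notMem (by simpa using hmem)]; linarith
  simp only [Pi.sub_apply, Pi.smul_apply, smul_eq_mul]
  refine ⟨by linear_combination hdyn - ε * hpulse, by linarith, by linarith [mul_nonneg hε.le hδ], ?_⟩
  rcases eq_or_ne t t₁ with rfl | h₁
  · have hD : pD t = 0 := (mul_eq_zero.1 hCD).resolve_left (by linarith)
    rw [chargeShift_left h12.ne, hD]
    exact ⟨by linarith, by linarith, le_rfl, by linarith, mul_zero _⟩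
  rcases eq_or_ne t t₂ with rfl | h₂
  · rw [chargeShift_right h12.ne, hd]
    exact ⟨by nlinarith [pow_nonneg hρ (t - t₁)], by linarith, le_rfl, by linarith, mul_zero _⟩
  · rw [chargeShift_of_ne h₁ h₂, mul_zero, sub_zero]
    exact ⟨hC0, hCle, hD0, hDle, hCD⟩

end ChargeShift

theorem marginal_charge_charge_general (P : Params) (hP : P.Valid) (T : ℕ)
    (C : ℕ → ℝ) (Send : ℝ) (pC pD s : ℕ → ℝ) (hx : Optimal P T C Send pC pD s)
    (t₁ t₂ : ℕ) (ht₁ : 1 ≤ t₁) (h12 : t₁ < t₂) (ht₂ : t₂ ≤ T)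
    (hc : 0 < pC t₁) (hd : pD t₂ = 0) (hslack : pC t₂ < P.PC)
    (hs : ∀ t : ℕ, t₁ ≤ t → t ≤ t₂ - 1 → P.Slo < s t) :
    C t₁ ≤ P.ρ ^ (t₂ - t₁) * C t₂ := by
  obtain ⟨hΔt, hρ, -, hηC, -⟩ := hP
  obtain ⟨hfeas, hsT, hopt⟩ := hx
  obtain ⟨ε, hε, hεC, hεslack, hεs⟩ : ∃ ε, 0 < ε ∧ ε ≤ pC t₁ ∧
      ε * P.ρ ^ (t₂ - t₁) ≤ P.PC - pC t₂ ∧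
      ∀ t ∈ Ico t₁ t₂, ε * stateShift P t₁ t₂ t ≤ s t - P.Slo :=
    Eventually.exists_gt <| (eventually_le_nhds hc).and <|
      (eventually_mul_le_of_pos _ (sub_pos.2 hslack)).and <| (eventually_all_finset _).2
        fun t ht => eventually_mul_le_of_pos _ (sub_pos.2 (hs t (mem_Ico.1 ht).1
          (Nat.le_sub_one_of_lt (mem_Ico.1 ht).2)))
  have hgain := hopt _ _ _
    (hfeas.sub_smul_shift hΔt.le hηC.le hρ.le ht₁ h12 hε hεC hd hεslack hεs)
    (by simp [stateShift_of_le (P := P) (t₁ := t₁) ht₂, hsT])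
  rw [profit_sub_smul_chargeShift C pC pD ε (mem_Icc.2 ⟨ht₁, by omega⟩)
    (mem_Icc.2 ⟨by omega, ht₂⟩)] at hgain
  have hloss : P.Δt * ε * (C t₁ - P.ρ ^ (t₂ - t₁) * C t₂) ≤ 0 := by linarith
  exact sub_nonpos.1 (nonpos_of_mul_nonpos_right hloss (mul_pos hΔt hε))

/-- Marginal price relation (charge–charge pair): if an optimal schedule
charges at t₁, does not discharge at t₂ > t₁ and has slack charge capacity
there, with the state of energy strictly above S̲ on {t₁,…,t₂−1}, then
C_{t₁} ≤ ρ^{t₂−t₁} C_{t₂}. -/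
theorem marginal_charge_charge (P : Params) (hP : P.Valid) (T : ℕ) (hT : 1 ≤ T)
    (C : ℕ → ℝ) (Send : ℝ) (pC pD s : ℕ → ℝ) (hx : Optimal P T C Send pC pD s)
    (t₁ t₂ : ℕ) (ht₁ : 1 ≤ t₁) (h12 : t₁ < t₂) (ht₂ : t₂ ≤ T)
    (hc : 0 < pC t₁) (hd : pD t₂ = 0) (hslack : pC t₂ < P.PC)
    (hs : ∀ t : ℕ, t₁ ≤ t → t ≤ t₂ - 1 → P.Slo < s t) :
    C t₁ ≤ P.ρ ^ (t₂ - t₁) * C t₂ :=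
  marginal_charge_charge_general P hP T C Send pC pD s hx t₁ t₂ ht₁ h12 ht₂ hc hd hslack hs
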